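/- arXiv:0910.0144 — 2 statements merged into one kernel-verified Lean document; each statement's English description precedes it below -/
import Mathlib

section
/- Fix a > 1, λ ∈ (0,1), and a sequence (X_i)_{i≥1} of positive reals, and let A′ be the associated reordered on/off process with cycle endpoints T_N = (a/λ)·Σ_{i=1}^N X_i and queue Q(t) = sup_{0≤s≤t} ∫_s^t (A′(u) − 1) du. Then the queue drains completely within every off-period (Q(T_N) = 0 for all N) and for every N ≥ 1: ∫_0^{T_N} Q(t) dt = (a(a−1)/2) · Σ_{i=1}^N X_i². -/
open MeasureTheory Set Finset

/-!
Write `F t = ∫₀ᵗ (A - 1)` for the net input, so that Reich's formula reads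
`Q t = F t - min_{[0,t]} F`. Within the `i`-th cycle `F` rises with slope `a - 1` during the
on-period and then falls with slope `-1`; as the cycle lasts at least `a Xᵢ`, `F` ends it no
higher than it started. So on that cycle the minimum of `F` over `[0, t]` is attained at `Tᵢ`
or at `t`, and `Q t = max (a min(τ, Xᵢ) - τ) 0` with `τ = t - Tᵢ`: a triangle of height
`(a - 1) Xᵢ` over the base `[0, a Xᵢ]`, of area `a (a - 1) Xᵢ² / 2`, vanishing at `τ = 0`.
-/

noncomputable def netInput (A : ℝ → ℝ) (t : ℝ) : ℝ := ∫ v in (0:ℝ)..t, (A v - 1)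

noncomputable def queueLength (A : ℝ → ℝ) (t : ℝ) : ℝ :=
  ⨆ u : Icc (0:ℝ) t, ∫ v in (u:ℝ)..t, (A v - 1)

/-- `netInput A (Tᵢ + τ) - netInput A Tᵢ` on a cycle whose on-period has length `x`. -/
def cycleNetInput (a x τ : ℝ) : ℝ := a * min τ x - τ

section cycleNetInput

variable {a x σ τ : ℝ}

lemma min_zero_cycleNetInput_le (ha : 1 ≤ a) (hσ : 0 ≤ σ) (hστ : σ ≤ τ) :
    min 0 (cycleNetInput a x τ) ≤ cycleNetInput a x σ := by
  unfold cycleNetInput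
  rcases le_total σ x with h | h
  · rw [min_eq_left h]
    exact min_le_of_left_le (by nlinarith)
  · rw [min_eq_right h, min_eq_right (h.trans hστ)]
    exact min_le_of_right_le (by linarith)

lemma cycleNetInput_nonpos (ha : 0 ≤ a) (hτ : a * x ≤ τ) : cycleNetInput a x τ ≤ 0 := by
  unfold cycleNetInput
  nlinarith [min_le_right τ x]

lemma continuous_cycleNetInput : Continuous (cycleNetInput a x) := by
  unfold cycleNetInput
  fun_prop

lemma integral_max_cycleNetInput (ha : 1 ≤ a) (hx : 0 ≤ x) {L : ℝ} (hL : a * x ≤ L) :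
    ∫ τ in (0:ℝ)..L, max (cycleNetInput a x τ) 0 = a * (a - 1) / 2 * x ^ 2 := by
  have hxax : x ≤ a * x := by nlinarith
  have hint : ∀ s t, IntervalIntegrable (fun τ => max (cycleNetInput a x τ) 0) volume s t :=
    fun s t => (continuous_cycleNetInput.max continuous_const).intervalIntegrable s t
  have rise : EqOn (fun τ => max (cycleNetInput a x τ) 0) (fun τ => (a - 1) * τ)
      (uIcc 0 x) := by
    intro τ hτ
    rw [uIcc_of_le hx] at hτ
    simp only [cycleNetInput, min_eq_left hτ.2]
    rw [max_eq_left (by nlinarith [hτ.1])]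
    ring
  have fall : EqOn (fun τ => max (cycleNetInput a x τ) 0) (fun τ => a * x - τ)
      (uIcc x (a * x)) := by
    intro τ hτ
    rw [uIcc_of_le hxax] at hτ
    simp only [cycleNetInput, min_eq_right hτ.1]
    exact max_eq_left (by linarith [hτ.2])
  have idle : EqOn (fun τ => max (cycleNetInput a x τ) 0) (fun _ => 0) (uIcc (a * x) L) := by
    intro τ hτ
    rw [uIcc_of_le hL] at hτ
    exact max_eq_right (cycleNetInput_nonpos (by linarith) hτ.1)
  rw [← intervalIntegral.integral_add_adjacent_intervals (hint 0 x) (hint x L),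
    ← intervalIntegral.integral_add_adjacent_intervals (hint x (a * x)) (hint (a * x) L),
    intervalIntegral.integral_congr rise, intervalIntegral.integral_congr fall,
    intervalIntegral.integral_congr idle, intervalIntegral.integral_const_mul,
    intervalIntegral.integral_sub intervalIntegrable_const intervalIntegral.intervalIntegrable_id,
    integral_id, integral_id, intervalIntegral.integral_const, intervalIntegral.integral_const]
  simp only [smul_eq_mul]
  ring

end cycleNetInput

lemma iSup_Icc_sub_eq_max {F : ℝ → ℝ} {s t : ℝ} (hs : s ∈ Icc 0 t)
    (hmin : ∀ u ∈ Icc 0 t, min (F s) (F t) ≤ F u) :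
    ⨆ u : Icc (0:ℝ) t, (F t - F u) = max (F t - F s) 0 := by
  have ht : t ∈ Icc 0 t := ⟨hs.1.trans hs.2, le_rfl⟩
  have hbdd : BddAbove (range fun u : Icc (0:ℝ) t => F t - F u) := by
    refine ⟨F t - min (F s) (F t), ?_⟩
    rintro _ ⟨u, rfl⟩
    linarith [hmin u u.2]
  have : Nonempty (Icc (0:ℝ) t) := ⟨⟨t, ht⟩⟩
  apply le_antisymm
  · refine ciSup_le fun u => ?_
    rcases min_le_iff.mp (hmin u u.2) with hu | hu
    · exact le_max_of_le_left (by linarith)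
    · exact le_max_of_le_right (by linarith)
  · refine max_le (le_ciSup_of_le hbdd ⟨s, hs⟩ le_rfl) (le_ciSup_of_le hbdd ⟨t, ht⟩ ?_)
    simp

structure IsDrainingOnOff (a : ℝ) (X T : ℕ → ℝ) (A : ℝ → ℝ) : Prop where
  one_le : 1 ≤ a
  nonneg : ∀ i, 0 ≤ X i
  T_zero : T 0 = 0
  drains : ∀ i, T i + a * X i ≤ T (i + 1)
  on : ∀ i t, T i ≤ t → t < T i + X i → A t = a
  off : ∀ i t, T i + X i ≤ t → t < T (i + 1) → A t = 0

namespace IsDrainingOnOff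

variable {a : ℝ} {X T : ℕ → ℝ} {A : ℝ → ℝ} {s t u : ℝ}

lemma T_add_X_le_succ (h : IsDrainingOnOff a X T A) (i : ℕ) : T i + X i ≤ T (i + 1) := by
  nlinarith [h.drains i, h.nonneg i, h.one_le]

lemma T_le_succ (h : IsDrainingOnOff a X T A) (i : ℕ) : T i ≤ T (i + 1) := by
  linarith [h.T_add_X_le_succ i, h.nonneg i]

lemma T_nonneg (h : IsDrainingOnOff a X T A) (i : ℕ) : 0 ≤ T i :=
  h.T_zero ▸ (monotone_nat_of_le_succ h.T_le_succ) (Nat.zero_le i)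

lemma eqOn_onPeriod (h : IsDrainingOnOff a X T A) (i : ℕ) (hs : s ∈ Icc (T i) (T i + X i))
    (ht : t ∈ Icc (T i) (T i + X i)) : EqOn (fun v => A v - 1) (fun _ => a - 1) (uIoo s t) :=
  fun v hv => by
    have hv' := uIoo_subset_Ioo hs ht hv
    simp only [h.on i v hv'.1.le hv'.2]

lemma eqOn_offPeriod (h : IsDrainingOnOff a X T A) (i : ℕ)
    (hs : s ∈ Icc (T i + X i) (T (i + 1)))
    (ht : t ∈ Icc (T i + X i) (T (i + 1))) : EqOn (fun v => A v - 1) (fun _ => -1) (uIoo s t) :=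
  fun v hv => by
    have hv' := uIoo_subset_Ioo hs ht hv
    simp only [h.off i v hv'.1.le hv'.2, zero_sub]


lemma intervalIntegrable_cycle (h : IsDrainingOnOff a X T A) (i : ℕ) :
    IntervalIntegrable (fun v => A v - 1) volume (T i) (T (i + 1)) := by
  have hon : T i + X i ∈ Icc (T i) (T i + X i) := ⟨by linarith [h.nonneg i], le_rfl⟩
  have hoff : T i + X i ∈ Icc (T i + X i) (T (i + 1)) := ⟨le_rfl, h.T_add_X_le_succ i⟩
  have eon := h.eqOn_onPeriod i (left_mem_Icc.2 hon.1) hon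
  have eoff := h.eqOn_offPeriod i hoff (right_mem_Icc.2 hoff.2)
  exact (intervalIntegrable_const.congr_uIoo eon.symm).trans
    (intervalIntegrable_const.congr_uIoo eoff.symm)

lemma integral_cycle (h : IsDrainingOnOff a X T A) (i : ℕ) (ht : t ∈ Icc (T i) (T (i + 1))) :
    ∫ v in T i..t, (A v - 1) = cycleNetInput a (X i) (t - T i) := by
  have hstart : T i ∈ Icc (T i) (T i + X i) := ⟨le_rfl, by linarith [h.nonneg i]⟩
  rcases le_total t (T i + X i) with hon | hoff
  · rw [intervalIntegral.integral_congr_uIoo (h.eqOn_onPeriod i hstart ⟨ht.1, hon⟩),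
      intervalIntegral.integral_const, cycleNetInput, min_eq_left (by linarith), smul_eq_mul]
    ring
  · have hmid : T i + X i ∈ Icc (T i + X i) (T (i + 1)) := ⟨le_rfl, h.T_add_X_le_succ i⟩
    have hend : T i + X i ∈ Icc (T i) (T i + X i) := ⟨hstart.2, le_rfl⟩
    have eon := h.eqOn_onPeriod i hstart hend
    have eoff := h.eqOn_offPeriod i hmid ⟨hoff, ht.2⟩
    rw [← intervalIntegral.integral_add_adjacent_intervals
        (intervalIntegrable_const.congr_uIoo eon.symm)
        (intervalIntegrable_const.congr_uIoo eoff.symm),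
      intervalIntegral.integral_congr_uIoo eon, intervalIntegral.integral_congr_uIoo eoff,
      intervalIntegral.integral_const, intervalIntegral.integral_const, cycleNetInput,
      min_eq_right (by linarith), smul_eq_mul, smul_eq_mul]
    ring

lemma intervalIntegrable (h : IsDrainingOnOff a X T A) (N : ℕ) (hs : s ∈ Icc 0 (T N))
    (ht : t ∈ Icc 0 (T N)) : IntervalIntegrable (fun v => A v - 1) volume s t := by
  have hN := IntervalIntegrable.trans_iterate fun k (_ : k < N) => h.intervalIntegrable_cycle k
  rw [h.T_zero] at hN
  exact hN.mono_set (uIcc_subset_uIcc (Icc_subset_uIcc hs) (Icc_subset_uIcc ht))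

lemma integral_eq_netInput_sub (h : IsDrainingOnOff a X T A) (N : ℕ) (hu : u ∈ Icc 0 (T N))
    (ht : t ∈ Icc 0 (T N)) : ∫ v in u..t, (A v - 1) = netInput A t - netInput A u := by
  have h0 : (0:ℝ) ∈ Icc 0 (T N) := ⟨le_rfl, h.T_nonneg N⟩
  exact (intervalIntegral.integral_interval_sub_left (h.intervalIntegrable N h0 ht)
    (h.intervalIntegrable N h0 hu)).symm

lemma netInput_sub_netInput_T (h : IsDrainingOnOff a X T A) (i : ℕ)
    (ht : t ∈ Icc (T i) (T (i + 1))) :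
    netInput A t - netInput A (T i) = cycleNetInput a (X i) (t - T i) := by
  have hT : ∀ {v}, v ∈ Icc (T i) (T (i + 1)) → v ∈ Icc 0 (T (i + 1)) :=
    fun hv => ⟨(h.T_nonneg i).trans hv.1, hv.2⟩
  rw [← h.integral_eq_netInput_sub (i + 1) (hT (left_mem_Icc.2 (h.T_le_succ i))) (hT ht),
    h.integral_cycle i ht]

lemma netInput_T_succ_le (h : IsDrainingOnOff a X T A) (i : ℕ)
    (hu : u ∈ Icc (T i) (T (i + 1))) : netInput A (T (i + 1)) ≤ netInput A u := by
  have hend := h.netInput_sub_netInput_T i (right_mem_Icc.2 (h.T_le_succ i))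
  have hdrains : a * X i ≤ T (i + 1) - T i := by linarith [h.drains i]
  have hmin := min_zero_cycleNetInput_le (x := X i) h.one_le (sub_nonneg.2 hu.1)
    (sub_le_sub_right hu.2 (T i))
  rw [min_eq_right (cycleNetInput_nonpos (by linarith [h.one_le]) hdrains)] at hmin
  linarith [h.netInput_sub_netInput_T i hu]

lemma netInput_T_le (h : IsDrainingOnOff a X T A) (N : ℕ) (hu : u ∈ Icc 0 (T N)) :
    netInput A (T N) ≤ netInput A u := by
  induction N generalizing u with
  | zero => rw [le_antisymm (h.T_zero ▸ hu.2) hu.1, h.T_zero]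
  | succ N ih =>
    rcases le_total u (T N) with hle | hge
    · exact (h.netInput_T_succ_le N (left_mem_Icc.2 (h.T_le_succ N))).trans (ih ⟨hu.1, hle⟩)
    · exact h.netInput_T_succ_le N ⟨hge, hu.2⟩

lemma min_netInput_le (h : IsDrainingOnOff a X T A) (i : ℕ) (ht : t ∈ Icc (T i) (T (i + 1)))
    (hu : u ∈ Icc 0 t) : min (netInput A (T i)) (netInput A t) ≤ netInput A u := by
  rcases le_total u (T i) with hle | hge
  · exact min_le_of_left_le (h.netInput_T_le i ⟨hu.1, hle⟩)
  · have hmin := min_zero_cycleNetInput_le (x := X i) h.one_le (sub_nonneg.2 hge)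
      (sub_le_sub_right hu.2 (T i))
    rw [← h.netInput_sub_netInput_T i ht, ← h.netInput_sub_netInput_T i ⟨hge, hu.2.trans ht.2⟩,
      ← sub_self (netInput A (T i)), min_sub_sub_right] at hmin
    linarith

lemma queueLength_eq (h : IsDrainingOnOff a X T A) (i : ℕ) (ht : t ∈ Icc (T i) (T (i + 1))) :
    queueLength A t = max (cycleNetInput a (X i) (t - T i)) 0 := by
  have ht0 : t ∈ Icc 0 (T (i + 1)) := ⟨(h.T_nonneg i).trans ht.1, ht.2⟩
  have hint : ∀ u : Icc (0:ℝ) t, ∫ v in (u:ℝ)..t, (A v - 1) = netInput A t - netInput A u :=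
    fun u => h.integral_eq_netInput_sub (i + 1) ⟨u.2.1, u.2.2.trans ht.2⟩ ht0
  rw [queueLength, iSup_congr hint,
    iSup_Icc_sub_eq_max ⟨h.T_nonneg i, ht.1⟩ fun u hu => h.min_netInput_le i ht hu,
    h.netInput_sub_netInput_T i ht]

lemma queueLength_T (h : IsDrainingOnOff a X T A) (N : ℕ) : queueLength A (T N) = 0 := by
  rw [h.queueLength_eq N (left_mem_Icc.2 (h.T_le_succ N)), sub_self, cycleNetInput,
    min_eq_left (h.nonneg N), mul_zero, sub_zero, max_self]

lemma eqOn_queueLength (h : IsDrainingOnOff a X T A) (i : ℕ) :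
    EqOn (queueLength A) (fun t => max (cycleNetInput a (X i) (t - T i)) 0)
      (uIcc (T i) (T (i + 1))) := fun _ ht =>
  h.queueLength_eq i (uIcc_of_le (h.T_le_succ i) ▸ ht)

lemma integral_queueLength_cycle (h : IsDrainingOnOff a X T A) (i : ℕ) :
    ∫ t in T i..T (i + 1), queueLength A t = a * (a - 1) / 2 * X i ^ 2 := by
  rw [intervalIntegral.integral_congr (h.eqOn_queueLength i),
    intervalIntegral.integral_comp_sub_right (fun τ => max (cycleNetInput a (X i) τ) 0), sub_self]
  exact integral_max_cycleNetInput h.one_le (h.nonneg i) (by linarith [h.drains i])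

lemma integral_queueLength (h : IsDrainingOnOff a X T A) (N : ℕ) :
    ∫ t in (0:ℝ)..T N, queueLength A t = a * (a - 1) / 2 * ∑ i ∈ range N, X i ^ 2 := by
  have hint (i : ℕ) : IntervalIntegrable (queueLength A) volume (T i) (T (i + 1)) := by
    have hcont : Continuous fun t => max (cycleNetInput a (X i) (t - T i)) 0 :=
      (continuous_cycleNetInput.comp (continuous_sub_right (T i))).max continuous_const
    exact (hcont.intervalIntegrable _ _).congr
      ((h.eqOn_queueLength i).symm.mono uIoc_subset_uIcc)
  have hsum := intervalIntegral.sum_integral_adjacent_intervals fun k (_ : k < N) => hint k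
  rw [h.T_zero] at hsum
  rw [← hsum, mul_sum]
  exact sum_congr rfl fun i _ => h.integral_queueLength_cycle i

end IsDrainingOnOff

/-- the reordered on/off process `A'` built from `(Xᵢ)` with cycle
endpoints `T N = (a/λ) Σ_{i<N} Xᵢ`: on cycle `i`, `A' = a` on `[T i, T i + Xᵢ)`
and `A' = 0` on `[T i + Xᵢ, T (i+1))`.  The queue drains completely within every
off-period (`Q (T N) = 0` for all `N`), and for every `N ≥ 1`
`∫_0^{T N} Q = (a(a-1)/2) Σ_{i<N} Xᵢ²`. -/
theorem stmt_2 (a lam : ℝ) (ha : 1 < a) (hlam : lam ∈ Set.Ioo (0:ℝ) 1)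
    (X : ℕ → ℝ) (hX : ∀ i, 0 < X i)
    (T : ℕ → ℝ) (hT : ∀ N, T N = (a / lam) * ∑ i ∈ Finset.range N, X i)
    (A : ℝ → ℝ)
    (hAon : ∀ i, ∀ t, T i ≤ t → t < T i + X i → A t = a)
    (hAoff : ∀ i, ∀ t, T i + X i ≤ t → t < T (i + 1) → A t = 0)
    (Q : ℝ → ℝ)
    (hQ : ∀ t, Q t = ⨆ u : Set.Icc (0:ℝ) t, ∫ v in (u : ℝ)..t, (A v - 1)) :
    (∀ N, Q (T N) = 0) ∧
    (∀ N, 1 ≤ N →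
      ∫ t in (0:ℝ)..(T N), Q t = (a * (a - 1) / 2) * ∑ i ∈ Finset.range N, (X i) ^ 2) := by
  have hdrains (i : ℕ) : T i + a * X i ≤ T (i + 1) := by
    have hslow : a ≤ a / lam := le_div_self (by linarith) hlam.1 hlam.2.le
    rw [hT, hT, sum_range_succ, mul_add]
    nlinarith [hX i]
  have h : IsDrainingOnOff a X T A :=
    { one_le := ha.le
      nonneg := fun i => (hX i).le
      T_zero := by simp [hT]
      drains := hdrains
      on := hAon
      off := hAoff }
  obtain rfl : Q = queueLength A := funext hQ
  exact ⟨h.queueLength_T, fun N _ => h.integral_queueLength N⟩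
end

section
/- Fix q > 0 and a > 1, and let (X_i)_{i≥1} be independent, identically distributed positive random variables with 0 < E[X_1] < ∞ and E[X_1²] = ∞. Let A be the on/off process whose i-th cycle consists of an on-period of length X_i at rate a followed by an off-period of length F_i = max((a−1)X_i, (a−1)aX_i²/(2q) − X_i), and let T′_N = Σ_{i=1}^N (X_i + F_i). Then almost surely the time-average arrival rate tends to zero: (1/T′_N) ∫_0^{T′_N} A(u) du = a·(Σ_{i=1}^N X_i)/T′_N → 0 as N → ∞; equivalently, the fraction of time spent in on-periods tends to zero. -/
/-!
Over one cycle the process delivers `a Xᵢ` units of work, so the time average equals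
`a (Σ Xᵢ) / T'_N`. Since `Fᵢ ≥ cXᵢ² - Xᵢ` with `c = (a-1)a/(2q) > 0`, we have `T'_N ≥ c Σ Xᵢ²`.
The strong law gives `(Σ Xᵢ)/N → E X₁`, while its truncated version, applied to `min (Xᵢ²) M`
for every `M`, gives `(Σ Xᵢ²)/N → ∞` because `E X₁² = ∞`. Hence the ratio tends to zero.
-/

open MeasureTheory ProbabilityTheory Filter Finset Set Topology
open scoped ENNReal

section OnOffIntegral

variable {f : ℝ → ℝ} {c d k : ℝ}

lemma ae_restrict_uIoc_eq_const_of_eqOn_Ico (hcd : c ≤ d) (h : EqOn f (fun _ => k) (Ico c d)) :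
    f =ᵐ[volume.restrict (uIoc c d)] fun _ => k := by
  rw [uIoc_of_le hcd, ← restrict_Ico_eq_restrict_Ioc]
  exact ae_restrict_of_forall_mem measurableSet_Ico h

lemma intervalIntegrable_of_eqOn_Ico (hcd : c ≤ d) (h : EqOn f (fun _ => k) (Ico c d)) :
    IntervalIntegrable f volume c d :=
  intervalIntegrable_const.congr_ae (ae_restrict_uIoc_eq_const_of_eqOn_Ico hcd h).symm

lemma intervalIntegral_eq_of_eqOn_Ico (hcd : c ≤ d) (h : EqOn f (fun _ => k) (Ico c d)) :
    ∫ t in c..d, f t = (d - c) * k := by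
  rw [intervalIntegral.integral_congr_ae_restrict (ae_restrict_uIoc_eq_const_of_eqOn_Ico hcd h),
    intervalIntegral.integral_const, smul_eq_mul]

lemma intervalIntegral_onOff_cycle {A : ℝ → ℝ} {r s x y : ℝ} (hx : 0 ≤ x) (hy : 0 ≤ y)
    (hon : EqOn A (fun _ => r) (Ico s (s + x)))
    (hoff : EqOn A (fun _ => 0) (Ico (s + x) (s + x + y))) :
    IntervalIntegrable A volume s (s + x + y) ∧ ∫ t in s..s + x + y, A t = r * x := by
  have hon' := intervalIntegrable_of_eqOn_Ico (by linarith) hon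
  have hoff' := intervalIntegrable_of_eqOn_Ico (by linarith) hoff
  refine ⟨hon'.trans hoff', ?_⟩
  rw [← intervalIntegral.integral_add_adjacent_intervals hon' hoff',
    intervalIntegral_eq_of_eqOn_Ico (by linarith) hon,
    intervalIntegral_eq_of_eqOn_Ico (by linarith) hoff]
  ring

lemma intervalIntegral_onOff {A : ℝ → ℝ} {r : ℝ} {x y t : ℕ → ℝ}
    (hx : ∀ i, 0 ≤ x i) (hy : ∀ i, 0 ≤ y i) (ht : ∀ N, t N = ∑ i ∈ range N, (x i + y i))
    (hon : ∀ i s, t i ≤ s → s < t i + x i → A s = r)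
    (hoff : ∀ i s, t i + x i ≤ s → s < t (i + 1) → A s = 0) (N : ℕ) :
    ∫ s in 0..t N, A s = r * ∑ i ∈ range N, x i := by
  have hsucc : ∀ i, t (i + 1) = t i + x i + y i := fun i => by
    rw [ht, ht, sum_range_succ, add_assoc]
  have hcycle : ∀ i, IntervalIntegrable A volume (t i) (t (i + 1)) ∧
      ∫ s in t i..t (i + 1), A s = r * x i := fun i => by
    rw [hsucc]
    exact intervalIntegral_onOff_cycle (hx i) (hy i) (fun s hs => hon i s hs.1 hs.2)
      (fun s hs => hoff i s hs.1 (hsucc i ▸ hs.2))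
  have hsum := intervalIntegral.sum_integral_adjacent_intervals (μ := volume)
    fun i (_ : i < N) => (hcycle i).1
  rw [show t 0 = 0 by simp [ht]] at hsum
  rw [← hsum, mul_sum]
  exact sum_congr rfl fun i _ => (hcycle i).2

end OnOffIntegral

section InfiniteMean

variable {Ω : Type*} {m : MeasurableSpace Ω} {μ : Measure Ω}

lemma integrable_min_natCast [IsFiniteMeasure μ] {Z : Ω → ℝ} (hZ : Measurable Z)
    (hZ0 : ∀ ω, 0 ≤ Z ω) (M : ℕ) : Integrable (fun ω => min (Z ω) M) μ :=
  .of_bound (hZ.min measurable_const).aestronglyMeasurable M <| ae_of_all _ fun ω => by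
    rw [Real.norm_of_nonneg (le_min (hZ0 ω) M.cast_nonneg)]
    exact min_le_right _ _

lemma tendsto_integral_min_natCast_atTop [IsFiniteMeasure μ] {Z : Ω → ℝ} (hZ : Measurable Z)
    (hZ0 : ∀ ω, 0 ≤ Z ω) (htop : ∫⁻ ω, ENNReal.ofReal (Z ω) ∂μ = ∞) :
    Tendsto (fun M : ℕ => ∫ ω, min (Z ω) M ∂μ) atTop atTop := by
  rw [← ENNReal.tendsto_ofReal_nhds_top, ← htop]
  simp_rw [ofReal_integral_eq_lintegral_ofReal (integrable_min_natCast hZ hZ0 _)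
    (ae_of_all _ fun ω => le_min (hZ0 ω) (Nat.cast_nonneg _))]
  refine lintegral_tendsto_of_tendsto_of_monotone
    (fun M => (hZ.min measurable_const).ennreal_ofReal.aemeasurable)
    (ae_of_all _ fun ω M M' hMM' => ENNReal.ofReal_le_ofReal (min_le_min_left _ (by
      exact_mod_cast hMM')))
    (ae_of_all _ fun ω => (ENNReal.continuous_ofReal.tendsto _).comp ?_)
  refine tendsto_const_nhds.congr' ?_
  filter_upwards [eventually_ge_atTop ⌈Z ω⌉₊] with M hM
  exact (min_eq_left ((Nat.le_ceil _).trans (by exact_mod_cast hM))).symm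

theorem strong_law_ae_real_of_lintegral_eq_top [IsProbabilityMeasure μ] {Y : ℕ → Ω → ℝ}
    (hmeas : Measurable (Y 0)) (hY0 : ∀ i ω, 0 ≤ Y i ω)
    (hindep : Pairwise (Function.onFun (IndepFun · · μ) Y)) (hident : ∀ i, IdentDistrib (Y i) (Y 0) μ μ)
    (htop : ∫⁻ ω, ENNReal.ofReal (Y 0 ω) ∂μ = ∞) :
    ∀ᵐ ω ∂μ, Tendsto (fun n : ℕ => (∑ i ∈ range n, Y i ω) / n) atTop atTop := by
  have htrunc : ∀ M : ℕ, Measurable fun y : ℝ => min y M := fun M =>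
    measurable_id.min measurable_const
  have hslln : ∀ M : ℕ, ∀ᵐ ω ∂μ, Tendsto (fun n : ℕ => (∑ i ∈ range n, min (Y i ω) M) / n)
      atTop (𝓝 (∫ ω, min (Y 0 ω) M ∂μ)) := fun M =>
    strong_law_ae_real (fun i ω => min (Y i ω) M) (integrable_min_natCast hmeas (hY0 0) M)
      (fun i j hij => (hindep hij).comp (htrunc M) (htrunc M))
      (fun i => (hident i).comp (htrunc M))
  filter_upwards [ae_all_iff.2 hslln] with ω hω
  refine tendsto_atTop.2 fun C => ?_
  obtain ⟨M, hM⟩ :=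
    ((tendsto_integral_min_natCast_atTop hmeas (hY0 0) htop).eventually_gt_atTop C).exists
  filter_upwards [(hω M).eventually (eventually_gt_nhds hM)] with n hn
  refine hn.le.trans ?_
  gcongr with i
  exact min_le_left _ _

end InfiniteMean

lemma tendsto_div_of_tendsto_div_natCast {u v : ℕ → ℝ} {l : ℝ}
    (hu : Tendsto (fun n : ℕ => u n / n) atTop (𝓝 l))
    (hv : Tendsto (fun n : ℕ => v n / n) atTop atTop) :
    Tendsto (fun n => u n / v n) atTop (𝓝 0) := by
  refine (hu.div_atTop hv).congr' ?_
  filter_upwards [eventually_ne_atTop 0] with n hn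
  exact div_div_div_cancel_right₀ (Nat.cast_ne_zero.2 hn) _ _

theorem stmt_15_general {Ω : Type*} [MeasureSpace Ω] [IsProbabilityMeasure (ℙ : Measure Ω)]
    (q a : ℝ) (hq : 0 < q) (ha : 1 < a)
    (X : ℕ → Ω → ℝ) (hmeas : ∀ i, Measurable (X i))
    (hpos : ∀ i ω, 0 < X i ω)
    (hindep : iIndepFun X ℙ)
    (hident : ∀ i, IdentDistrib (X i) (X 0) ℙ ℙ)
    (hint : Integrable (X 0) ℙ)
    (hsq : ∫⁻ ω, ENNReal.ofReal ((X 0 ω) ^ 2) = ⊤)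
    (F : Ω → ℕ → ℝ)
    (hF : ∀ ω i, F ω i = max ((a - 1) * X i ω) ((a - 1) * a * (X i ω) ^ 2 / (2 * q) - X i ω))
    (T : Ω → ℕ → ℝ) (hT : ∀ ω N, T ω N = ∑ i ∈ Finset.range N, (X i ω + F ω i))
    (A : Ω → ℝ → ℝ)
    (hAon : ∀ ω i, ∀ t, T ω i ≤ t → t < T ω i + X i ω → A ω t = a)
    (hAoff : ∀ ω i, ∀ t, T ω i + X i ω ≤ t → t < T ω (i + 1) → A ω t = 0) :
    (∀ ω, ∀ N, 1 ≤ N →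
      (1 / T ω N) * ∫ u in (0:ℝ)..(T ω N), A ω u
        = a * (∑ i ∈ Finset.range N, X i ω) / T ω N) ∧
    ∀ᵐ ω ∂ℙ, Tendsto (fun N => a * (∑ i ∈ Finset.range N, X i ω) / T ω N)
      atTop (nhds 0) := by
  have hF_nonneg : ∀ ω i, 0 ≤ F ω i := fun ω i => by
    rw [hF]
    exact le_max_of_le_left (mul_nonneg (by linarith) (hpos i ω).le)
  refine ⟨fun ω N _ => ?_, ?_⟩
  · rw [intervalIntegral_onOff (fun i => (hpos i ω).le) (hF_nonneg ω) (hT ω) (hAon ω) (hAoff ω),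
      one_div, inv_mul_eq_div]
  have hc : 0 < (a - 1) * a / (2 * q) := by
    have : 0 < a - 1 := by linarith
    positivity
  have hT_ge : ∀ ω N, (a - 1) * a / (2 * q) * ∑ i ∈ range N, X i ω ^ 2 ≤ T ω N := by
    intro ω N
    rw [hT, mul_sum]
    gcongr with i
    rw [hF]
    linarith [le_max_right ((a - 1) * X i ω) ((a - 1) * a * X i ω ^ 2 / (2 * q) - X i ω),
      show (a - 1) * a / (2 * q) * X i ω ^ 2 = (a - 1) * a * X i ω ^ 2 / (2 * q) by ring]
  have hsq_avg := strong_law_ae_real_of_lintegral_eq_top (Y := fun i ω => X i ω ^ 2)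
    ((hmeas 0).pow_const 2) (fun i ω => sq_nonneg _)
    (fun i j hij => (hindep.indepFun hij).comp (measurable_id.pow_const 2)
      (measurable_id.pow_const 2))
    (fun i => (hident i).comp (measurable_id.pow_const 2)) hsq
  filter_upwards [strong_law_ae_real X hint (fun i j hij => hindep.indepFun hij) hident,
    hsq_avg] with ω hmean hsq_avg
  refine tendsto_div_of_tendsto_div_natCast (l := a * ∫ ω, X 0 ω) ?_ ?_
  · simpa only [mul_div_assoc] using hmean.const_mul a
  · refine tendsto_atTop_mono (fun N => ?_) (hsq_avg.const_mul_atTop hc)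
    rw [← mul_div_assoc]
    gcongr
    exact hT_ge ω N

/-- for `q > 0`, `a > 1` and an i.i.d. sequence `(Xᵢ)` of positive
random variables with finite positive mean and infinite second moment, the
on/off process whose `i`-th cycle has on-length `Xᵢ` at rate `a` and off-length
`Fᵢ = max((a-1)Xᵢ, (a-1)aXᵢ²/(2q) - Xᵢ)` has time-average arrival rate
`(1/T'_N)∫_0^{T'_N} A = a (Σ_{i<N} Xᵢ)/T'_N`, which tends to zero almost
surely. -/
theorem stmt_15 {Ω : Type*} [MeasureSpace Ω] [IsProbabilityMeasure (ℙ : Measure Ω)]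
    (q a : ℝ) (hq : 0 < q) (ha : 1 < a)
    (X : ℕ → Ω → ℝ) (hmeas : ∀ i, Measurable (X i))
    (hpos : ∀ i ω, 0 < X i ω)
    (hindep : iIndepFun X ℙ)
    (hident : ∀ i, IdentDistrib (X i) (X 0) ℙ ℙ)
    (hint : Integrable (X 0) ℙ)
    (hmean : 0 < ∫ ω, X 0 ω)
    (hsq : ∫⁻ ω, ENNReal.ofReal ((X 0 ω) ^ 2) = ⊤)
    (F : Ω → ℕ → ℝ)
    (hF : ∀ ω i, F ω i = max ((a - 1) * X i ω) ((a - 1) * a * (X i ω) ^ 2 / (2 * q) - X i ω))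
    (T : Ω → ℕ → ℝ) (hT : ∀ ω N, T ω N = ∑ i ∈ Finset.range N, (X i ω + F ω i))
    (A : Ω → ℝ → ℝ)
    (hAon : ∀ ω i, ∀ t, T ω i ≤ t → t < T ω i + X i ω → A ω t = a)
    (hAoff : ∀ ω i, ∀ t, T ω i + X i ω ≤ t → t < T ω (i + 1) → A ω t = 0) :
    (∀ ω, ∀ N, 1 ≤ N →
      (1 / T ω N) * ∫ u in (0:ℝ)..(T ω N), A ω u
        = a * (∑ i ∈ Finset.range N, X i ω) / T ω N) ∧
    ∀ᵐ ω ∂ℙ, Tendsto (fun N => a * (∑ i ∈ Finset.range N, X i ω) / T ω N)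
      atTop (nhds 0) :=
  stmt_15_general q a hq ha X hmeas hpos hindep hident hint hsq F hF T hT A hAon hAoff
end
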